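/- arXiv:1001.4202 — 2 statements merged into one kernel-verified Lean document; each statement's English description precedes it below -/
import Mathlib

section
/- Let q₁ = (1,1,1,1,1,1,0,0,0,0,0,0), q₂ = (0,1,1,1,1,1,1,0,0,0,0,0), q₃ = (1,0,1,1,1,1,0,1,0,0,0,0), q₄ = (1,1,0,1,1,1,0,0,1,0,0,0), q₅ = (1,1,1,0,1,1,0,0,0,1,0,0), q₆ = (1,1,1,1,0,1,0,0,0,0,1,0), q₇ = (1,1,1,1,1,0,0,0,0,0,0,1) be elements of ℤ¹². Then the subgroup of ℤ¹² generated by q₁,…,q₇ is exactly the set of vectors v = (n₁,…,n₆,n′₁,…,n′₆) ∈ ℤ¹² such that nᵢ + n′ᵢ = nⱼ + n′ⱼ for all i, j ∈ {1,…,6}. -/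
def q1 : Fin 12 → ℤ := ![1,1,1,1,1,1,0,0,0,0,0,0]
def q2 : Fin 12 → ℤ := ![0,1,1,1,1,1,1,0,0,0,0,0]
def q3 : Fin 12 → ℤ := ![1,0,1,1,1,1,0,1,0,0,0,0]
def q4 : Fin 12 → ℤ := ![1,1,0,1,1,1,0,0,1,0,0,0]
def q5 : Fin 12 → ℤ := ![1,1,1,0,1,1,0,0,0,1,0,0]
def q6 : Fin 12 → ℤ := ![1,1,1,1,0,1,0,0,0,0,1,0]
def q7 : Fin 12 → ℤ := ![1,1,1,1,1,0,0,0,0,0,0,1]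

/-! The condition says that the pair sums `nₖ + n′ₖ` are all equal; such vectors form a subgroup
containing every `qᵢ`. Conversely, `q_{k+1}` is `q₁` with its `k`-th one moved to position `6 + k`,
so if every pair sum equals `s` then `v = (s - ∑ₖ n′ₖ) • q₁ + ∑ₖ n′ₖ • q_{k+1}`. -/

open Fin

section PairSums

variable {n : ℕ}

def constPairSumSubgroup (n : ℕ) : AddSubgroup (Fin (n + n) → ℤ) where
  carrier := {v | ∀ i j : Fin n,
    v (castAdd n i) + v (natAdd n i) = v (castAdd n j) + v (natAdd n j)}
  add_mem' {a b} ha hb i j := by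
    simp only [Pi.add_apply]
    linarith [ha i j, hb i j]
  zero_mem' _ _ := rfl
  neg_mem' {a} ha i j := by
    simp only [Pi.neg_apply]
    linarith [ha i j]

theorem mem_constPairSumSubgroup_of_forall_eq {v : Fin (n + n) → ℤ} (s : ℤ)
    (hs : ∀ i, v (castAdd n i) + v (natAdd n i) = s) : v ∈ constPairSumSubgroup n :=
  fun i j => (hs i).trans (hs j).symm

theorem exists_forall_eq_of_mem_constPairSumSubgroup {v : Fin (n + n) → ℤ}
    (hv : v ∈ constPairSumSubgroup n) : ∃ s, ∀ i, v (castAdd n i) + v (natAdd n i) = s := by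
  cases isEmpty_or_nonempty (Fin n) with
  | inl _ => exact ⟨0, isEmptyElim⟩
  | inr h => exact ⟨_, fun i => hv i h.some⟩

def firstHalfOnes (n : ℕ) : Fin (n + n) → ℤ := append 1 0

def moveOne (n : ℕ) (k : Fin n) : Fin (n + n) → ℤ := append (1 - Pi.single k 1) (Pi.single k 1)

theorem firstHalfOnes_mem : firstHalfOnes n ∈ constPairSumSubgroup n :=
  mem_constPairSumSubgroup_of_forall_eq 1 fun i => by
    simp only [firstHalfOnes, append_left, append_right, Pi.one_apply, Pi.zero_apply, add_zero]

theorem moveOne_mem (k : Fin n) : moveOne n k ∈ constPairSumSubgroup n :=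
  mem_constPairSumSubgroup_of_forall_eq 1 fun i => by
    simp only [moveOne, append_left, append_right, Pi.sub_apply, Pi.one_apply, sub_add_cancel]

theorem eq_smul_firstHalfOnes_add_sum_smul_moveOne {v : Fin (n + n) → ℤ} {s : ℤ}
    (hs : ∀ i, v (castAdd n i) + v (natAdd n i) = s) :
    v = (s - ∑ i, v (natAdd n i)) • firstHalfOnes n + ∑ i, v (natAdd n i) • moveOne n i := by
  ext x
  induction x using Fin.addCases with
  | left j =>
    simp only [firstHalfOnes, moveOne, Pi.add_apply, Pi.smul_apply, Finset.sum_apply, append_left,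
      Pi.sub_apply, Pi.one_apply, Pi.single_apply, smul_eq_mul, mul_one, mul_sub, mul_ite, mul_zero,
      Finset.sum_sub_distrib, Finset.sum_ite_eq, Finset.mem_univ, if_true]
    linarith [hs j]
  | right j =>
    simp only [firstHalfOnes, moveOne, Pi.add_apply, Pi.smul_apply, Finset.sum_apply, append_right,
      Pi.zero_apply, Pi.single_apply, smul_eq_mul, mul_zero, zero_add, mul_ite, mul_one,
      Finset.sum_ite_eq, Finset.mem_univ, if_true]

theorem closure_firstHalfOnes_moveOne :
    AddSubgroup.closure (insert (firstHalfOnes n) (Set.range (moveOne n))) =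
      constPairSumSubgroup n := by
  apply le_antisymm
  · rw [AddSubgroup.closure_le]
    rintro _ (rfl | ⟨k, rfl⟩)
    exacts [firstHalfOnes_mem, moveOne_mem k]
  · intro v hv
    obtain ⟨s, hs⟩ := exists_forall_eq_of_mem_constPairSumSubgroup hv
    rw [eq_smul_firstHalfOnes_add_sum_smul_moveOne hs]
    refine add_mem (zsmul_mem (AddSubgroup.subset_closure (Set.mem_insert _ _)) _)
      (sum_mem fun i _ => zsmul_mem (AddSubgroup.subset_closure ?_) _)
    exact Set.mem_insert_of_mem _ (Set.mem_range_self i)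

end PairSums

theorem firstHalfOnes_six : firstHalfOnes 6 = q1 := by decide

theorem moveOne_six : moveOne 6 = ![q2, q3, q4, q5, q6, q7] := by decide

/-- The subgroup of `ℤ¹²` generated by `q₁, …, q₇` is exactly the set of vectors
`v = (n₁,…,n₆,n′₁,…,n′₆)` such that `nᵢ + n′ᵢ = nⱼ + n′ⱼ` for all `i, j ∈ {1,…,6}`. -/
theorem kernel_connecting_map (v : Fin 12 → ℤ) :
    v ∈ AddSubgroup.closure ({q1, q2, q3, q4, q5, q6, q7} : Set (Fin 12 → ℤ)) ↔
      ∀ i j : Fin 6,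
        v (Fin.castAdd 6 i) + v (Fin.natAdd 6 i) =
          v (Fin.castAdd 6 j) + v (Fin.natAdd 6 j) := by
  have hq : ({q1, q2, q3, q4, q5, q6, q7} : Set (Fin 12 → ℤ)) =
      insert (firstHalfOnes 6) (Set.range (moveOne 6)) := by
    simp only [← firstHalfOnes_six, moveOne_six, Matrix.range_cons, Matrix.range_empty,
      Set.union_empty, Set.singleton_union]
  rw [hq, closure_firstHalfOnes_moveOne]
  rfl
end

section
/- Let G be a locally compact Hausdorff unimodular topological group with Haar measure λ, let Ω be a compact Hausdorff space with a continuous right action of G, and let μ be a G-invariant Borel probability measure on Ω. For a continuous compactly supported function f : Ω × G → ℂ define f*(ω, x) := conj(f(ω·x, x⁻¹)), the convolution (f ∗ g)(ω, x) := ∫_G f(ω, h) · g(ω·h, h⁻¹x) dλ(h), and τ(f) := ∫_Ω f(ω, e) dμ(ω). Then τ(f ∗ f*) = ∫_Ω ∫_G |f(ω, h)|² dλ(h) dμ(ω); in particular τ(f ∗ f*) ≥ 0. -/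
/-!
The trace only sees the convolution at `x = e`, where the integrand is
`f(ω, h) f*(ω·h, h⁻¹) = f(ω, h) conj f(ω·h·h⁻¹, h) = |f(ω, h)|²`, pointwise in `(ω, h)`.
-/

open MeasureTheory

theorem act_act_inv {Ω G : Type*} [Group G] (act : Ω → G → Ω)
    (hact_one : ∀ ω, act ω 1 = ω) (hact_mul : ∀ ω (g h : G), act (act ω g) h = act ω (g * h))
    (ω : Ω) (g : G) : act (act ω g) g⁻¹ = ω := by
  rw [hact_mul, mul_inv_cancel, hact_one]

theorem trace_positive_general
    (G : Type*) [Group G] [MeasurableSpace G] (lam : Measure G)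
    (Ω : Type*) [MeasurableSpace Ω]
    (act : Ω → G → Ω)
    (hact_one : ∀ ω, act ω 1 = ω)
    (hact_mul : ∀ ω (g h : G), act (act ω g) h = act ω (g * h))
    (μ : Measure Ω)
    (f : Ω × G → ℂ) (fstar : Ω × G → ℂ)
    (hfstar : ∀ ω (x : G), fstar (ω, x) = (starRingEnd ℂ) (f (act ω x, x⁻¹))) :
    (∫ ω, (∫ h, f (ω, h) * fstar (act ω h, h⁻¹ * 1) ∂lam) ∂μ) =
        ((∫ ω, (∫ h, ‖f (ω, h)‖ ^ 2 ∂lam) ∂μ : ℝ) : ℂ) ∧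
      0 ≤ (∫ ω, (∫ h, ‖f (ω, h)‖ ^ 2 ∂lam) ∂μ : ℝ) := by
  have diagonal : ∀ ω h, f (ω, h) * fstar (act ω h, h⁻¹ * 1) = ((‖f (ω, h)‖ ^ 2 : ℝ) : ℂ) := by
    intro ω h
    rw [hfstar, mul_one, act_act_inv act hact_one hact_mul, inv_inv, Complex.mul_conj',
      Complex.ofReal_pow]
  refine ⟨?_, integral_nonneg fun ω => integral_nonneg fun h => by positivity⟩
  simp_rw [diagonal, integral_complex_ofReal]

/-- Positivity of the trace `τ^μ` on `C_c(Ω × G)`: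
with `f*(ω, x) = conj(f(ω·x, x⁻¹))`, `(f ∗ g)(ω, x) = ∫_G f(ω, h) g(ω·h, h⁻¹x) dλ(h)`
and `τ(f) = ∫_Ω f(ω, e) dμ(ω)`, one has
`τ(f ∗ f*) = ∫_Ω ∫_G |f(ω, h)|² dλ(h) dμ(ω)`; in particular `τ(f ∗ f*) ≥ 0`. -/
theorem trace_positive
    (G : Type*) [Group G] [TopologicalSpace G] [IsTopologicalGroup G]
    [LocallyCompactSpace G] [T2Space G] [MeasurableSpace G] [BorelSpace G]
    (lam : Measure G) [lam.IsHaarMeasure] [lam.IsMulRightInvariant]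
    (Ω : Type*) [TopologicalSpace Ω] [CompactSpace Ω] [T2Space Ω]
    [MeasurableSpace Ω] [BorelSpace Ω]
    (act : Ω → G → Ω)
    (hact_one : ∀ ω, act ω 1 = ω)
    (hact_mul : ∀ ω (g h : G), act (act ω g) h = act ω (g * h))
    (hact_cont : Continuous fun p : Ω × G => act p.1 p.2)
    (μ : Measure Ω) [IsProbabilityMeasure μ]
    (hμ : ∀ g : G, MeasurePreserving (fun ω => act ω g) μ μ)
    (f : Ω × G → ℂ) (hf : Continuous f) (hf' : HasCompactSupport f)
    (fstar : Ω × G → ℂ)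
    (hfstar : ∀ ω (x : G), fstar (ω, x) = (starRingEnd ℂ) (f (act ω x, x⁻¹))) :
    (∫ ω, (∫ h, f (ω, h) * fstar (act ω h, h⁻¹ * 1) ∂lam) ∂μ) =
        ((∫ ω, (∫ h, ‖f (ω, h)‖ ^ 2 ∂lam) ∂μ : ℝ) : ℂ) ∧
      0 ≤ (∫ ω, (∫ h, ‖f (ω, h)‖ ^ 2 ∂lam) ∂μ : ℝ) :=
  trace_positive_general G lam Ω act hact_one hact_mul μ f fstar hfstar
end
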